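/- Let L > 0, ε ∈ ℝ, and let u, v : ℝ² → ℝ be smooth (C^∞) and L-periodic. Then the function φ(s) = E_PFC(u + s·v) is differentiable at s = 0 with φ′(0) = ∫_Ω (u³ + (1−ε)u + 2Δu + Δ²u)·v dx. -/

import Mathlib

open MeasureTheory

noncomputable section

/-- The box `Ω = [0,L]²` in `ℝ²` (modeled as `ℝ × ℝ`). -/
def box (L : ℝ) : Set (ℝ × ℝ) := Set.Icc (0 : ℝ) L ×ˢ Set.Icc (0 : ℝ) L

/-- `f : ℝ² → ℝ` is `L`-periodic: periodic with period `L` in each coordinate direction. -/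
def IsPeriodic (L : ℝ) (f : ℝ × ℝ → ℝ) : Prop :=
  ∀ x : ℝ × ℝ, f (x.1 + L, x.2) = f x ∧ f (x.1, x.2 + L) = f x

/-- First partial derivative `∂f/∂x₁`. -/
def pd1 (f : ℝ × ℝ → ℝ) (x : ℝ × ℝ) : ℝ := fderiv ℝ f x (1, 0)

/-- Second partial derivative `∂f/∂x₂`. -/
def pd2 (f : ℝ × ℝ → ℝ) (x : ℝ × ℝ) : ℝ := fderiv ℝ f x (0, 1)

/-- The Laplacian `Δf = ∂²f/∂x₁² + ∂²f/∂x₂²`. -/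
def lap (f : ℝ × ℝ → ℝ) (x : ℝ × ℝ) : ℝ := pd1 (pd1 f) x + pd2 (pd2 f) x

/-- The squared gradient `|∇f|² = (∂f/∂x₁)² + (∂f/∂x₂)²`. -/
def gradSq (f : ℝ × ℝ → ℝ) (x : ℝ × ℝ) : ℝ := (pd1 f x) ^ 2 + (pd2 f x) ^ 2

/-- The PFC free energy `E_PFC(u) = ∫_Ω [¼u⁴ + ((1−ε)/2)u² − |∇u|² + ½(Δu)²] dx`. -/
def EPFC (L ε : ℝ) (u : ℝ × ℝ → ℝ) : ℝ :=
  ∫ x in box L, ((1/4) * u x ^ 4 + ((1 - ε)/2) * u x ^ 2 - gradSq u x + (1/2) * (lap u x) ^ 2)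

/-! ### Auxiliary lemmas -/

lemma measurableSet_box (L : ℝ) : MeasurableSet (box L) :=
  measurableSet_Icc.prod measurableSet_Icc

lemma isCompact_box (L : ℝ) : IsCompact (box L) :=
  isCompact_Icc.prod isCompact_Icc

lemma contDiff_pdw {f : ℝ × ℝ → ℝ} (hf : ContDiff ℝ (⊤ : ℕ∞) f) (w : ℝ × ℝ) :
    ContDiff ℝ (⊤ : ℕ∞) (fun x => fderiv ℝ f x w) :=
  (hf.fderiv_right (by simp)).clm_apply contDiff_const

lemma contDiff_pd1 {f : ℝ × ℝ → ℝ} (hf : ContDiff ℝ (⊤ : ℕ∞) f) : ContDiff ℝ (⊤ : ℕ∞) (pd1 f) :=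
  contDiff_pdw hf (1, 0)

lemma contDiff_pd2 {f : ℝ × ℝ → ℝ} (hf : ContDiff ℝ (⊤ : ℕ∞) f) : ContDiff ℝ (⊤ : ℕ∞) (pd2 f) :=
  contDiff_pdw hf (0, 1)

lemma contDiff_lap {f : ℝ × ℝ → ℝ} (hf : ContDiff ℝ (⊤ : ℕ∞) f) : ContDiff ℝ (⊤ : ℕ∞) (lap f) :=
  (contDiff_pd1 (contDiff_pd1 hf)).add (contDiff_pd2 (contDiff_pd2 hf))

lemma add_pair1 (y : ℝ × ℝ) (L : ℝ) : y + (L, 0) = (y.1 + L, y.2) := by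
  simp [Prod.ext_iff]

lemma add_pair2 (y : ℝ × ℝ) (L : ℝ) : y + (0, L) = (y.1, y.2 + L) := by
  simp [Prod.ext_iff]

lemma fderiv_shift_eq {f : ℝ × ℝ → ℝ} (hf : Differentiable ℝ f) {c : ℝ × ℝ}
    (hc : ∀ y, f (y + c) = f y) (x : ℝ × ℝ) : fderiv ℝ f (x + c) = fderiv ℝ f x := by
  have hT : HasFDerivAt (fun y : ℝ × ℝ => y + c) (ContinuousLinearMap.id ℝ (ℝ × ℝ)) x :=
    (hasFDerivAt_id x).add_const c
  have h := (hf (x + c)).hasFDerivAt.comp x hT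
  have hfc : (f ∘ fun y : ℝ × ℝ => y + c) = f := funext fun y => hc y
  have h2 : HasFDerivAt f (fderiv ℝ f (x + c)) x := by
    simpa [hfc] using h
  exact h2.fderiv.symm

lemma isPeriodic_pdw {L : ℝ} {f : ℝ × ℝ → ℝ} (hf : Differentiable ℝ f)
    (hp : IsPeriodic L f) (w : ℝ × ℝ) :
    IsPeriodic L (fun x => fderiv ℝ f x w) := by
  intro x
  constructor
  · show fderiv ℝ f (x.1 + L, x.2) w = fderiv ℝ f x w
    rw [(add_pair1 x L).symm, fderiv_shift_eq hf (fun y => by rw [add_pair1]; exact (hp y).1) x]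
  · show fderiv ℝ f (x.1, x.2 + L) w = fderiv ℝ f x w
    rw [(add_pair2 x L).symm, fderiv_shift_eq hf (fun y => by rw [add_pair2]; exact (hp y).2) x]

lemma isPeriodic_pd1 {L : ℝ} {f : ℝ × ℝ → ℝ} (hf : Differentiable ℝ f)
    (hp : IsPeriodic L f) : IsPeriodic L (pd1 f) :=
  isPeriodic_pdw hf hp (1, 0)

lemma isPeriodic_pd2 {L : ℝ} {f : ℝ × ℝ → ℝ} (hf : Differentiable ℝ f)
    (hp : IsPeriodic L f) : IsPeriodic L (pd2 f) :=
  isPeriodic_pdw hf hp (0, 1)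

lemma isPeriodic_lap {L : ℝ} {f : ℝ × ℝ → ℝ} (hf : ContDiff ℝ (⊤ : ℕ∞) f)
    (hp : IsPeriodic L f) : IsPeriodic L (lap f) := by
  have d := hf.differentiable (by simp)
  have h1 := isPeriodic_pd1 ((contDiff_pd1 hf).differentiable (by simp)) (isPeriodic_pd1 d hp)
  have h2 := isPeriodic_pd2 ((contDiff_pd2 hf).differentiable (by simp)) (isPeriodic_pd2 d hp)
  intro x
  exact ⟨by simp only [lap, (h1 x).1, (h2 x).1], by simp only [lap, (h1 x).2, (h2 x).2]⟩

lemma integrableOn_box {L : ℝ} {f : ℝ × ℝ → ℝ} (hf : Continuous f) :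
    IntegrableOn f (box L) :=
  hf.continuousOn.integrableOn_compact (isCompact_box L)

lemma integral_pd2_eq_zero {L : ℝ} (hL : 0 < L) {f : ℝ × ℝ → ℝ}
    (hf : ContDiff ℝ (⊤ : ℕ∞) f) (hp : IsPeriodic L f) :
    ∫ x in box L, pd2 f x = 0 := by
  have hcont : Continuous (pd2 f) := (contDiff_pd2 hf).continuous
  have hint : IntegrableOn (pd2 f) (box L) := integrableOn_box hcont
  simp only [box] at hint ⊢
  rw [Measure.volume_eq_prod] at hint ⊢
  rw [setIntegral_prod _ hint]
  have hinner : ∀ x : ℝ, (∫ y in Set.Icc (0:ℝ) L, pd2 f (x, y)) = 0 := by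
    intro x
    have hd : ∀ y : ℝ, HasDerivAt (fun t => f (x, t)) (pd2 f (x, y)) y := fun y =>
      ((hf.differentiable (by simp)) (x, y)).hasFDerivAt.comp_hasDerivAt y
        ((hasDerivAt_const y x).prodMk (hasDerivAt_id y))
    have hcc : Continuous fun t : ℝ => pd2 f (x, t) :=
      hcont.comp (continuous_const.prodMk continuous_id)
    rw [MeasureTheory.integral_Icc_eq_integral_Ioc, ← intervalIntegral.integral_of_le hL.le,
      intervalIntegral.integral_eq_sub_of_hasDerivAt (fun t _ => hd t)
        (hcc.intervalIntegrable 0 L)]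
    have hper := (hp (x, 0)).2
    simp only [zero_add] at hper
    rw [hper, sub_self]
  simp [hinner]

lemma integral_box_swap {L : ℝ} {f : ℝ × ℝ → ℝ} (hf : Continuous f) :
    ∫ x in box L, f x = ∫ y in Set.Icc (0:ℝ) L, ∫ x in Set.Icc (0:ℝ) L, f (x, y) := by
  have hint : IntegrableOn f (box L) := integrableOn_box hf
  simp only [box] at hint ⊢
  rw [Measure.volume_eq_prod] at hint ⊢
  rw [IntegrableOn, ← Measure.prod_restrict] at hint
  rw [show ((volume : Measure ℝ).prod volume).restrict
        (Set.Icc (0:ℝ) L ×ˢ Set.Icc (0:ℝ) L)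
      = ((volume : Measure ℝ).restrict (Set.Icc (0:ℝ) L)).prod
          ((volume : Measure ℝ).restrict (Set.Icc (0:ℝ) L)) from
    (Measure.prod_restrict _ _).symm]
  rw [integral_prod _ hint]
  exact integral_integral_swap (by exact hint)

lemma integral_pd1_eq_zero {L : ℝ} (hL : 0 < L) {f : ℝ × ℝ → ℝ}
    (hf : ContDiff ℝ (⊤ : ℕ∞) f) (hp : IsPeriodic L f) :
    ∫ x in box L, pd1 f x = 0 := by
  have hcont : Continuous (pd1 f) := (contDiff_pd1 hf).continuous
  rw [integral_box_swap hcont]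
  have hinner : ∀ y : ℝ, (∫ x in Set.Icc (0:ℝ) L, pd1 f (x, y)) = 0 := by
    intro y
    have hd : ∀ x : ℝ, HasDerivAt (fun t => f (t, y)) (pd1 f (x, y)) x := fun x =>
      ((hf.differentiable (by simp)) (x, y)).hasFDerivAt.comp_hasDerivAt x
        ((hasDerivAt_id x).prodMk (hasDerivAt_const x y))
    have hcc : Continuous fun t : ℝ => pd1 f (t, y) :=
      hcont.comp (continuous_id.prodMk continuous_const)
    rw [MeasureTheory.integral_Icc_eq_integral_Ioc, ← intervalIntegral.integral_of_le hL.le,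
      intervalIntegral.integral_eq_sub_of_hasDerivAt (fun t _ => hd t)
        (hcc.intervalIntegrable 0 L)]
    have hper := (hp (0, y)).1
    simp only [zero_add] at hper
    rw [hper, sub_self]
  simp [hinner]

lemma pdw_add {f g : ℝ × ℝ → ℝ} {x : ℝ × ℝ} (hf : DifferentiableAt ℝ f x)
    (hg : DifferentiableAt ℝ g x) (w : ℝ × ℝ) :
    fderiv ℝ (fun y => f y + g y) x w = fderiv ℝ f x w + fderiv ℝ g x w := by
  rw [fderiv_fun_add hf hg]; rfl

lemma pdw_const_mul {f : ℝ × ℝ → ℝ} {x : ℝ × ℝ} (hf : DifferentiableAt ℝ f x) (c : ℝ)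
    (w : ℝ × ℝ) :
    fderiv ℝ (fun y => c * f y) x w = c * fderiv ℝ f x w := by
  rw [fderiv_const_mul hf c]; rfl

lemma pdw_add_smul {f g : ℝ × ℝ → ℝ} (hf : Differentiable ℝ f) (hg : Differentiable ℝ g)
    (s : ℝ) (w : ℝ × ℝ) :
    (fun x => fderiv ℝ (fun y => f y + s * g y) x w)
      = fun x => fderiv ℝ f x w + s * fderiv ℝ g x w :=
  funext fun x => by
    rw [pdw_add (hf x) ((hg x).const_mul s), pdw_const_mul (hg x) s]

lemma pd_combo (w : ℝ × ℝ) {f g h k p q : ℝ × ℝ → ℝ}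
    (hf : Differentiable ℝ f) (hg : Differentiable ℝ g) (hh : Differentiable ℝ h)
    (hk : Differentiable ℝ k) (hp : Differentiable ℝ p) (hq : Differentiable ℝ q) (x : ℝ × ℝ) :
    fderiv ℝ (fun y => -2 * (f y * g y) + h y * k y - p y * q y) x w =
      -2 * (fderiv ℝ f x w * g x + f x * fderiv ℝ g x w)
        + (fderiv ℝ h x w * k x + h x * fderiv ℝ k x w)
        - (fderiv ℝ p x w * q x + p x * fderiv ℝ q x w) := by
  have m1 := ((hf x).hasFDerivAt.mul (hg x).hasFDerivAt).const_mul (-2 : ℝ)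
  have m2 := (hh x).hasFDerivAt.mul (hk x).hasFDerivAt
  have m3 := (hp x).hasFDerivAt.mul (hq x).hasFDerivAt
  have H := (m1.add m2).sub m3
  rw [show (fun y => -2 * (f y * g y) + h y * k y - p y * q y) = ((fun y => -2 * (f * g) y) + h * k - p * q) from rfl, H.fderiv]
  simp only [ContinuousLinearMap.coe_sub', ContinuousLinearMap.coe_add', Pi.sub_apply,
    Pi.add_apply, ContinuousLinearMap.coe_smul', Pi.smul_apply, smul_eq_mul]
  ring

/-- The integrand of `EPFC L ε (u + s v)`, written explicitly as a polynomial in `s`. -/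
def Pfun (ε : ℝ) (u v : ℝ × ℝ → ℝ) (s : ℝ) (x : ℝ × ℝ) : ℝ :=
  (1/4) * (u x + s * v x) ^ 4 + ((1 - ε)/2) * (u x + s * v x) ^ 2
    - ((pd1 u x + s * pd1 v x) ^ 2 + (pd2 u x + s * pd2 v x) ^ 2)
    + (1/2) * (lap u x + s * lap v x) ^ 2

/-- The `s`-derivative of `Pfun`. -/
def Pder (ε : ℝ) (u v : ℝ × ℝ → ℝ) (s : ℝ) (x : ℝ × ℝ) : ℝ :=
  (u x + s * v x) ^ 3 * v x + (1 - ε) * ((u x + s * v x) * v x)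
    - (2 * (pd1 u x + s * pd1 v x) * pd1 v x + 2 * (pd2 u x + s * pd2 v x) * pd2 v x)
    + (lap u x + s * lap v x) * lap v x

lemma EPFC_eq_Pfun (L ε : ℝ) {u v : ℝ × ℝ → ℝ}
    (hu : ContDiff ℝ (⊤ : ℕ∞) u) (hv : ContDiff ℝ (⊤ : ℕ∞) v) (s : ℝ) :
    EPFC L ε (fun x => u x + s * v x) = ∫ x in box L, Pfun ε u v s x := by
  have du := hu.differentiable (by simp)
  have dv := hv.differentiable (by simp)
  have d1u := (contDiff_pd1 hu).differentiable (by simp)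
  have d1v := (contDiff_pd1 hv).differentiable (by simp)
  have d2u := (contDiff_pd2 hu).differentiable (by simp)
  have d2v := (contDiff_pd2 hv).differentiable (by simp)
  have hps1 : pd1 (fun x => u x + s * v x) = fun x => pd1 u x + s * pd1 v x :=
    pdw_add_smul du dv s (1, 0)
  have hps2 : pd2 (fun x => u x + s * v x) = fun x => pd2 u x + s * pd2 v x :=
    pdw_add_smul du dv s (0, 1)
  have e11 : pd1 (fun x => pd1 u x + s * pd1 v x)
      = fun x => pd1 (pd1 u) x + s * pd1 (pd1 v) x := pdw_add_smul d1u d1v s (1, 0)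
  have e22 : pd2 (fun x => pd2 u x + s * pd2 v x)
      = fun x => pd2 (pd2 u) x + s * pd2 (pd2 v) x := pdw_add_smul d2u d2v s (0, 1)
  unfold EPFC
  congr 1
  funext x
  simp only [Pfun, gradSq, lap, hps1, hps2, e11, e22]
  ring

lemma hasDerivAt_Pfun (ε : ℝ) (u v : ℝ × ℝ → ℝ) (x : ℝ × ℝ) (s : ℝ) :
    HasDerivAt (fun r => Pfun ε u v r x) (Pder ε u v s x) s := by
  have h1 : HasDerivAt (fun r : ℝ => u x + r * v x) (v x) s := by
    simpa using (hasDerivAt_mul_const (v x)).const_add (u x)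
  have h2 : HasDerivAt (fun r : ℝ => pd1 u x + r * pd1 v x) (pd1 v x) s := by
    simpa using (hasDerivAt_mul_const (pd1 v x)).const_add (pd1 u x)
  have h3 : HasDerivAt (fun r : ℝ => pd2 u x + r * pd2 v x) (pd2 v x) s := by
    simpa using (hasDerivAt_mul_const (pd2 v x)).const_add (pd2 u x)
  have h4 : HasDerivAt (fun r : ℝ => lap u x + r * lap v x) (lap v x) s := by
    simpa using (hasDerivAt_mul_const (lap v x)).const_add (lap u x)
  have H := ((((h1.pow 4).const_mul (1/4 : ℝ)).add
      ((h1.pow 2).const_mul ((1 - ε)/2))).sub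
      ((h2.pow 2).add (h3.pow 2))).add ((h4.pow 2).const_mul (1/2 : ℝ))
  refine H.congr_deriv ?_
  simp only [Pder]
  push_cast
  ring

/-- First variation of the PFC energy: `φ(s) = E_PFC(u + s v)` is differentiable at `0` with
`φ′(0) = ∫_Ω (u³ + (1−ε)u + 2Δu + Δ²u) v dx`. -/
theorem EPFC_first_variation
    (L : ℝ) (hL : 0 < L) (ε : ℝ) (u v : ℝ × ℝ → ℝ)
    (hu : ContDiff ℝ (⊤ : ℕ∞) u) (hv : ContDiff ℝ (⊤ : ℕ∞) v)
    (hup : IsPeriodic L u) (hvp : IsPeriodic L v) :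
    HasDerivAt (fun s : ℝ => EPFC L ε (fun x => u x + s * v x))
      (∫ x in box L,
        (u x ^ 3 + (1 - ε) * u x + 2 * lap u x + lap (lap u) x) * v x) 0 := by
  have du := hu.differentiable (by simp)
  have dv := hv.differentiable (by simp)
  have hlu : ContDiff ℝ (⊤ : ℕ∞) (lap u) := contDiff_lap hu
  have hlv : ContDiff ℝ (⊤ : ℕ∞) (lap v) := contDiff_lap hv
  have cu := hu.continuous
  have cv := hv.continuous
  have c1u := (contDiff_pd1 hu).continuous
  have c2u := (contDiff_pd2 hu).continuous
  have c1v := (contDiff_pd1 hv).continuous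
  have c2v := (contDiff_pd2 hv).continuous
  have clu := hlu.continuous
  have clv := hlv.continuous
  have cllu := (contDiff_lap hlu).continuous
  have cPder : Continuous fun p : ℝ × (ℝ × ℝ) => Pder ε u v p.1 p.2 := by
    unfold Pder
    fun_prop
  have cPder0 : Continuous (fun x => Pder ε u v 0 x) :=
    cPder.comp (continuous_const.prodMk continuous_id)
  have cPfun : ∀ s : ℝ, Continuous (fun x => Pfun ε u v s x) := by
    intro s; unfold Pfun; fun_prop
  obtain ⟨C, hC⟩ := (isCompact_Icc.prod (isCompact_box L)).exists_bound_of_continuousOn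
      (s := Set.Icc (-1 : ℝ) 1 ×ˢ box L) cPder.continuousOn
  have main := hasDerivAt_integral_of_dominated_loc_of_deriv_le
      (μ := volume.restrict (box L)) (F := fun s x => Pfun ε u v s x)
      (F' := fun s x => Pder ε u v s x) (x₀ := (0 : ℝ)) (bound := fun _ => C)
      (Metric.ball_mem_nhds (0 : ℝ) one_pos)
      (Filter.Eventually.of_forall fun s => (cPfun s).aestronglyMeasurable)
      (integrableOn_box (cPfun 0))
      cPder0.aestronglyMeasurable
      ?_ ?_ ?_
  · have hfeq : (fun s : ℝ => EPFC L ε (fun x => u x + s * v x))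
        = fun s => ∫ x in box L, Pfun ε u v s x :=
      funext fun s => EPFC_eq_Pfun L ε hu hv s
    have key : (∫ x in box L, Pder ε u v 0 x)
        = ∫ x in box L, (u x ^ 3 + (1 - ε) * u x + 2 * lap u x + lap (lap u) x) * v x := by
      have d1u := (contDiff_pd1 hu).differentiable (by simp)
      have d2u := (contDiff_pd2 hu).differentiable (by simp)
      have d1v := (contDiff_pd1 hv).differentiable (by simp)
      have d2v := (contDiff_pd2 hv).differentiable (by simp)
      have dlu := hlu.differentiable (by simp)
      have dp1lu := (contDiff_pd1 hlu).differentiable (by simp)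
      have dp2lu := (contDiff_pd2 hlu).differentiable (by simp)
      have hAsm : ContDiff ℝ (⊤ : ℕ∞)
          (fun y => -2 * (pd1 u y * v y) + lap u y * pd1 v y - pd1 (lap u) y * v y) :=
        ((contDiff_const.mul ((contDiff_pd1 hu).mul hv)).add
          (hlu.mul (contDiff_pd1 hv))).sub ((contDiff_pd1 hlu).mul hv)
      have hBsm : ContDiff ℝ (⊤ : ℕ∞)
          (fun y => -2 * (pd2 u y * v y) + lap u y * pd2 v y - pd2 (lap u) y * v y) :=
        ((contDiff_const.mul ((contDiff_pd2 hu).mul hv)).add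
          (hlu.mul (contDiff_pd2 hv))).sub ((contDiff_pd2 hlu).mul hv)
      have p1u := isPeriodic_pd1 du hup
      have p2u := isPeriodic_pd2 du hup
      have p1v := isPeriodic_pd1 dv hvp
      have p2v := isPeriodic_pd2 dv hvp
      have plu := isPeriodic_lap hu hup
      have pp1lu := isPeriodic_pd1 dlu plu
      have pp2lu := isPeriodic_pd2 dlu plu
      have hAper : IsPeriodic L
          (fun y => -2 * (pd1 u y * v y) + lap u y * pd1 v y - pd1 (lap u) y * v y) := by
        intro x
        exact ⟨by simp only [(p1u x).1, (hvp x).1, (plu x).1, (p1v x).1, (pp1lu x).1],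
               by simp only [(p1u x).2, (hvp x).2, (plu x).2, (p1v x).2, (pp1lu x).2]⟩
      have hBper : IsPeriodic L
          (fun y => -2 * (pd2 u y * v y) + lap u y * pd2 v y - pd2 (lap u) y * v y) := by
        intro x
        exact ⟨by simp only [(p2u x).1, (hvp x).1, (plu x).1, (p2v x).1, (pp2lu x).1],
               by simp only [(p2u x).2, (hvp x).2, (plu x).2, (p2v x).2, (pp2lu x).2]⟩
      have eA : ∀ x : ℝ × ℝ,
          pd1 (fun y => -2 * (pd1 u y * v y) + lap u y * pd1 v y - pd1 (lap u) y * v y) x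
            = -2 * (pd1 (pd1 u) x * v x + pd1 u x * pd1 v x)
              + (pd1 (lap u) x * pd1 v x + lap u x * pd1 (pd1 v) x)
              - (pd1 (pd1 (lap u)) x * v x + pd1 (lap u) x * pd1 v x) :=
        fun x => pd_combo (1, 0) d1u dv dlu d1v dp1lu dv x
      have eB : ∀ x : ℝ × ℝ,
          pd2 (fun y => -2 * (pd2 u y * v y) + lap u y * pd2 v y - pd2 (lap u) y * v y) x
            = -2 * (pd2 (pd2 u) x * v x + pd2 u x * pd2 v x)
              + (pd2 (lap u) x * pd2 v x + lap u x * pd2 (pd2 v) x)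
              - (pd2 (pd2 (lap u)) x * v x + pd2 (lap u) x * pd2 v x) :=
        fun x => pd_combo (0, 1) d2u dv dlu d2v dp2lu dv x
      have hsum : ∀ x : ℝ × ℝ, Pder ε u v 0 x
          = (u x ^ 3 + (1 - ε) * u x + 2 * lap u x + lap (lap u) x) * v x
            + (pd1 (fun y => -2 * (pd1 u y * v y) + lap u y * pd1 v y - pd1 (lap u) y * v y) x
              + pd2 (fun y => -2 * (pd2 u y * v y) + lap u y * pd2 v y - pd2 (lap u) y * v y) x) := by
        intro x
        rw [eA x, eB x]
        simp only [Pder, lap]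
        ring
      have cT : Continuous fun x : ℝ × ℝ =>
          (u x ^ 3 + (1 - ε) * u x + 2 * lap u x + lap (lap u) x) * v x := by fun_prop
      have cA1 : Continuous
          (pd1 (fun y => -2 * (pd1 u y * v y) + lap u y * pd1 v y - pd1 (lap u) y * v y)) :=
        (contDiff_pd1 hAsm).continuous
      have cB2 : Continuous
          (pd2 (fun y => -2 * (pd2 u y * v y) + lap u y * pd2 v y - pd2 (lap u) y * v y)) :=
        (contDiff_pd2 hBsm).continuous
      calc ∫ x in box L, Pder ε u v 0 x
          = ∫ x in box L,
            ((u x ^ 3 + (1 - ε) * u x + 2 * lap u x + lap (lap u) x) * v x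
              + (pd1 (fun y => -2 * (pd1 u y * v y) + lap u y * pd1 v y - pd1 (lap u) y * v y) x
                + pd2 (fun y => -2 * (pd2 u y * v y) + lap u y * pd2 v y - pd2 (lap u) y * v y) x)) := by
            simp only [hsum]
        _ = (∫ x in box L, (u x ^ 3 + (1 - ε) * u x + 2 * lap u x + lap (lap u) x) * v x)
            + ∫ x in box L,
              (pd1 (fun y => -2 * (pd1 u y * v y) + lap u y * pd1 v y - pd1 (lap u) y * v y) x
                + pd2 (fun y => -2 * (pd2 u y * v y) + lap u y * pd2 v y - pd2 (lap u) y * v y) x) :=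
            integral_add (integrableOn_box cT)
              ((integrableOn_box cA1).add (integrableOn_box cB2))
        _ = ∫ x in box L, (u x ^ 3 + (1 - ε) * u x + 2 * lap u x + lap (lap u) x) * v x := by
            rw [integral_add (integrableOn_box cA1) (integrableOn_box cB2),
              integral_pd1_eq_zero hL hAsm hAper, integral_pd2_eq_zero hL hBsm hBper]
            ring
    rw [hfeq, ← key]
    exact main.2
  · filter_upwards [ae_restrict_mem (measurableSet_box L)] with x hx
    intro s hs
    have habs : |s| < 1 := by simpa [Real.dist_eq] using hs
    exact hC (s, x) ⟨Set.mem_Icc.2 ⟨by linarith [(abs_lt.1 habs).1], (abs_lt.1 habs).2.le⟩, hx⟩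
  · exact integrableOn_const ((isCompact_box L).measure_lt_top.ne)
  · exact Filter.Eventually.of_forall fun x s _ => hasDerivAt_Pfun ε u v x s
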